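/- arXiv:1012.1125 — 3 statements merged into one kernel-verified Lean document; each statement's English description precedes it below -/
import Mathlib

section
/- Let η ∈ ℝⁿ with η ≠ 0, f ∈ ℝⁿ, x ∈ ℝ, and let γ be the standard Gaussian measure on ℝⁿ. Then (1/(2π)) ∫_ℝ ∫_{ℝⁿ} exp(i⟨f + λη, ω⟩ - iλx) dγ(ω) dλ = (2π‖η‖²)^{-1/2} · exp(-(i⟨η, f⟩ - x)²/(2‖η‖²) - ‖f‖²/2). -/
/-!
Under the product Gaussian measure the coordinates are independent standard normals, so the
inner integral is the characteristic function `exp (-‖f + λη‖² / 2 - iλx)`. This is a Gaussian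
in `λ` with variance `1 / ‖η‖²`, and the outer integral is the Fourier transform of that
Gaussian, computed by completing the square.
-/

open Real Complex MeasureTheory ProbabilityTheory Matrix

section

variable {ι : Type*} [Fintype ι]

lemma integral_cexp_dotProduct_pi {μ : ι → Measure ℝ} [∀ i, SigmaFinite (μ i)] (g : ι → ℝ) :
    ∫ ω : ι → ℝ, cexp (I * ((g ⬝ᵥ ω : ℝ) : ℂ)) ∂(Measure.pi μ) = ∏ i, charFun (μ i) (g i) := by
  simp_rw [charFun_apply_real, ← integral_fintype_prod_eq_prod, ← Complex.exp_sum]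
  congr with ω
  simp [dotProduct, Finset.mul_sum, mul_comm]

lemma integral_cexp_dotProduct_stdGaussian (g : ι → ℝ) :
    ∫ ω : ι → ℝ, cexp (I * ((g ⬝ᵥ ω : ℝ) : ℂ)) ∂(Measure.pi fun _ => gaussianReal 0 1)
      = cexp (-((g ⬝ᵥ g : ℝ) : ℂ) / 2) := by
  simp_rw [integral_cexp_dotProduct_pi, charFun_gaussianReal, ← Complex.exp_sum]
  simp [dotProduct, neg_div, Finset.sum_div, sq]

lemma integral_cexp_dotProduct_add_smul_stdGaussian (η f : ι → ℝ) (x l : ℝ) :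
    ∫ ω : ι → ℝ, cexp (I * (((f + l • η) ⬝ᵥ ω : ℝ) : ℂ) - I * l * x)
        ∂(Measure.pi fun _ => gaussianReal 0 1)
      = cexp (-((η ⬝ᵥ η : ℝ) : ℂ) / 2 * l ^ 2 + (-((η ⬝ᵥ f : ℝ) : ℂ) - I * x) * l
          - ((f ⬝ᵥ f : ℝ) : ℂ) / 2) := by
  simp_rw [sub_eq_add_neg _ (I * _ * _), Complex.exp_add, integral_mul_const,
    integral_cexp_dotProduct_stdGaussian, ← Complex.exp_add]
  congr 1
  simp only [add_dotProduct, dotProduct_add, smul_dotProduct, dotProduct_smul, smul_eq_mul,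
    dotProduct_comm f η]
  push_cast
  ring

end

lemma inv_two_pi_mul_sqrt_two_pi_div {s : ℝ} (hs : 0 < s) :
    (2 * π)⁻¹ * √(2 * π / s) = (√(2 * π * s))⁻¹ := by
  have hπ : 0 < 2 * π := by positivity
  rw [Real.sqrt_div hπ.le, Real.sqrt_mul hπ.le]
  field_simp
  exact Real.sq_sqrt hπ.le

lemma one_div_two_pi_mul_integral_cexp_quadratic {s : ℝ} (hs : 0 < s) (b c : ℂ) :
    1 / (2 * (π : ℂ)) * ∫ l : ℝ, cexp (-(s : ℂ) / 2 * l ^ 2 + b * l + c)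
      = ((√(2 * π * s))⁻¹ : ℝ) * cexp (b ^ 2 / (2 * s) + c) := by
  have hre : (-(s : ℂ) / 2).re < 0 := by simp; linarith
  rw [integral_cexp_quadratic hre, ← mul_assoc, ← inv_two_pi_mul_sqrt_two_pi_div hs]
  have hsC : (s : ℂ) ≠ 0 := by exact_mod_cast hs.ne'
  congr 1
  · have : (π : ℂ) / -(-(s : ℂ) / 2) = ((2 * π / s : ℝ) : ℂ) := by push_cast; field_simp
    rw [this, Real.sqrt_eq_rpow, ofReal_mul, ofReal_cpow (by positivity)]
    push_cast
    ring
  · congr 1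
    field_simp
    ring

theorem stmt_12 (n : ℕ) (η f : Fin n → ℝ) (hη : η ≠ 0) (x : ℝ)
    (γ : Measure (Fin n → ℝ))
    (hγ : γ = Measure.pi fun _ => gaussianReal 0 1) :
    (1 / (2 * (π : ℂ))) *
        ∫ l : ℝ, ∫ ω : Fin n → ℝ,
          Complex.exp (I * (((f + l • η) ⬝ᵥ ω : ℝ) : ℂ) - I * l * x) ∂γ =
      (((Real.sqrt (2 * π * (η ⬝ᵥ η)))⁻¹ : ℝ) : ℂ) *
        Complex.exp (-(I * ((η ⬝ᵥ f : ℝ) : ℂ) - x) ^ 2 / (2 * ((η ⬝ᵥ η : ℝ) : ℂ))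
          - ((f ⬝ᵥ f : ℝ) : ℂ) / 2) := by
  have hηη : 0 < η ⬝ᵥ η := by simpa using dotProduct_star_self_pos_iff.mpr hη
  simp_rw [hγ, integral_cexp_dotProduct_add_smul_stdGaussian, sub_eq_add_neg _ (_ / (2 : ℂ)),
    one_div_two_pi_mul_integral_cexp_quadratic hηη]
  congr 3
  -- `(-a - i x)² = -(i a - x)²` since `i² = -1`
  linear_combination ((((η ⬝ᵥ f : ℝ) : ℂ) ^ 2 + (x : ℂ) ^ 2) / (2 * ((η ⬝ᵥ η : ℝ) : ℂ))) * I_sq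
end

section
/- Let k > 0, y ∈ ℝ and 0 < t < π/(2√k). The function K(y, t) = (√k/(2πi·sin(√k·t)))^{1/2} · exp(i·√k·y²/(2·tan(√k·t))) (principal branch of the square root) satisfies the harmonic oscillator Schrödinger equation i ∂K/∂t = -(1/2) ∂²K/∂y² + (k/2)·y²·K. -/
/-!
Under the Gaussian ansatz `ψ y t = a t * exp (b t * y ^ 2)`, comparing the coefficients of `1`
and `y ^ 2`, the Schrödinger equation becomes the pair of ODEs `i a' = -b a` and the Riccati
equation `i b' = -2 b ^ 2 + k / 2`. With `ω = √k`, the phase `b = i ω cot (ω t) / 2` solves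
the Riccati equation because `cot' = -(1 + cot ^ 2)`, and the amplitude
`a = (ω / (2 π i sin (ω t))) ^ (1/2)` has logarithmic derivative `-ω cot (ω t) / 2`, since its
base stays off the branch cut (it is purely imaginary).
-/

open Real Complex

-- `tan x = sin x / cos x` holds for every `x` (both sides are `0` where `cos x = 0`).
theorem Real.hasDerivAt_inv_tan {x : ℝ} (hx : Real.sin x ≠ 0) :
    HasDerivAt (fun x => (Real.tan x)⁻¹) (-(1 + (Real.tan x)⁻¹ ^ 2)) x := by
  simp only [Real.tan_eq_sin_div_cos, inv_div]
  refine ((Real.hasDerivAt_cos x).div (Real.hasDerivAt_sin x) hx).congr_deriv ?_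
  field_simp
  ring

theorem Real.hasDerivAt_inv_sin {x : ℝ} (hx : Real.sin x ≠ 0) :
    HasDerivAt (fun x => (Real.sin x)⁻¹) (-((Real.sin x)⁻¹ * (Real.tan x)⁻¹)) x := by
  refine ((Real.hasDerivAt_sin x).inv hx).congr_deriv ?_
  rw [Real.tan_eq_sin_div_cos, inv_div]
  ring

theorem Complex.ofReal_mul_I_mem_slitPlane {r : ℝ} (hr : r ≠ 0) : (r : ℂ) * I ∈ slitPlane :=
  mem_slitPlane_iff.mpr (Or.inr (by simpa using hr))

theorem HasDerivAt.cpow_const_of_eq_mul {g : ℝ → ℂ} {L : ℂ} {t : ℝ} (c : ℂ)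
    (hg : HasDerivAt g (g t * L) t) (hslit : g t ∈ slitPlane) :
    HasDerivAt (fun τ => g τ ^ c) (c * L * g t ^ c) t := by
  refine ((hasStrictDerivAt_cpow_const (c := c) hslit).hasDerivAt.comp t hg).congr_deriv ?_
  have hg0 : g t ≠ 0 := slitPlane_ne_zero hslit
  rw [Complex.cpow_sub _ _ hg0, Complex.cpow_one]
  field_simp

theorem hasDerivAt_gaussian (α β : ℂ) (z : ℝ) :
    HasDerivAt (fun w : ℝ => α * exp (β * (w : ℂ) ^ 2))
      (2 * β * z * (α * exp (β * (z : ℂ) ^ 2))) z := by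
  have h : HasDerivAt (fun w : ℂ => α * exp (β * w ^ 2))
      (2 * β * z * (α * exp (β * (z : ℂ) ^ 2))) z :=
    ((((hasDerivAt_pow 2 (z : ℂ)).const_mul β).cexp).const_mul α).congr_deriv (by ring)
  exact h.comp_ofReal

theorem deriv_deriv_gaussian (α β : ℂ) (y : ℝ) :
    deriv (fun z => deriv (fun w : ℝ => α * exp (β * (w : ℂ) ^ 2)) z) y
      = (4 * β ^ 2 * y ^ 2 + 2 * β) * (α * exp (β * (y : ℂ) ^ 2)) := by
  have hlin : HasDerivAt (fun z : ℝ => 2 * β * (z : ℂ)) (2 * β) y := by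
    simpa using (hasDerivAt_id (y : ℂ)).comp_ofReal.const_mul (2 * β)
  simp only [fun z => (hasDerivAt_gaussian α β z).deriv]
  exact (hlin.mul (hasDerivAt_gaussian α β y)).deriv.trans (by ring)

theorem schrodinger_harmonic_of_gaussian_ansatz {k : ℝ} {a b : ℝ → ℂ} {a' b' : ℂ}
    {t : ℝ} (ψ : ℝ → ℝ → ℂ)
    (hψ : ∀ y τ, ψ y τ = a τ * exp (b τ * (y : ℂ) ^ 2))
    (ha : HasDerivAt a a' t) (hb : HasDerivAt b b' t)
    (ha' : I * a' = -(b t * a t)) (hb' : I * b' = -2 * b t ^ 2 + k / 2) (y : ℝ) :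
    I * deriv (fun τ => ψ y τ) t =
      -(1/2) * deriv (fun z => deriv (fun w => ψ w t) z) y + (k/2) * (y : ℂ) ^ 2 * ψ y t := by
  have htime : HasDerivAt (fun τ => ψ y τ)
      ((a' + a t * b' * (y : ℂ) ^ 2) * exp (b t * (y : ℂ) ^ 2)) t := by
    simp only [hψ]
    exact (ha.mul (hb.mul_const _).cexp).congr_deriv (by ring)
  rw [htime.deriv]
  simp only [hψ]
  rw [deriv_deriv_gaussian]
  linear_combination exp (b t * (y : ℂ) ^ 2) * ha' +
    a t * exp (b t * (y : ℂ) ^ 2) * (y : ℂ) ^ 2 * hb'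

section HarmonicOscillator

variable {ω t : ℝ}

theorem hasDerivAt_inv_sin_mul (hs : Real.sin (ω * t) ≠ 0) :
    HasDerivAt (fun τ => (Real.sin (ω * τ))⁻¹)
      (-((Real.sin (ω * t))⁻¹ * (Real.tan (ω * t))⁻¹) * ω) t :=
  (Real.hasDerivAt_inv_sin hs).comp t (hasDerivAt_const_mul ω)

theorem hasDerivAt_inv_tan_mul (hs : Real.sin (ω * t) ≠ 0) :
    HasDerivAt (fun τ => (Real.tan (ω * τ))⁻¹) (-(1 + (Real.tan (ω * t))⁻¹ ^ 2) * ω) t :=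
  (Real.hasDerivAt_inv_tan hs).comp t (hasDerivAt_const_mul ω)

theorem hasDerivAt_harmonic_amplitude (hω : ω ≠ 0) (hs : Real.sin (ω * t) ≠ 0) :
    HasDerivAt (fun τ => ((ω : ℂ) / (2 * π * I * (Real.sin (ω * τ) : ℂ))) ^ (1 / 2 : ℂ))
      (1 / 2 * -(ω * (Real.tan (ω * t) : ℂ)⁻¹) *
        ((ω : ℂ) / (2 * π * I * (Real.sin (ω * t) : ℂ))) ^ (1 / 2 : ℂ)) t := by
  have hbase : ∀ τ, (ω : ℂ) / (2 * π * I * (Real.sin (ω * τ) : ℂ))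
      = ω / (2 * π * I) * ((Real.sin (ω * τ))⁻¹ : ℝ) := by
    intro τ
    push_cast
    ring
  have hslit : (ω : ℂ) / (2 * π * I * (Real.sin (ω * t) : ℂ)) ∈ slitPlane := by
    generalize Real.sin (ω * t) = s at hs ⊢
    convert ofReal_mul_I_mem_slitPlane (r := -(ω / (2 * π * s))) (by
      simp [hω, hs, Real.pi_ne_zero]) using 1
    have := Complex.ofReal_ne_zero.mpr hs
    have := Complex.ofReal_ne_zero.mpr Real.pi_ne_zero
    push_cast
    field_simp
    linear_combination (ω : ℂ) * I_sq
  simp only [hbase] at hslit ⊢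
  refine HasDerivAt.cpow_const_of_eq_mul _
    (((hasDerivAt_inv_sin_mul hs).ofReal_comp.const_mul _).congr_deriv ?_) hslit
  push_cast
  ring

theorem hasDerivAt_harmonic_phase (hs : Real.sin (ω * t) ≠ 0) :
    HasDerivAt (fun τ => I * (ω : ℂ) / (2 * (Real.tan (ω * τ) : ℂ)))
      (-(I * ω ^ 2 / 2) * (1 + (Real.tan (ω * t) : ℂ)⁻¹ ^ 2)) t := by
  have hphase : (fun τ => I * (ω : ℂ) / (2 * (Real.tan (ω * τ) : ℂ)))
      = fun τ => I * ω / 2 * ((Real.tan (ω * τ))⁻¹ : ℝ) := by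
    ext τ
    push_cast
    ring
  rw [hphase]
  refine ((hasDerivAt_inv_tan_mul hs).ofReal_comp.const_mul _).congr_deriv ?_
  push_cast
  ring

end HarmonicOscillator

theorem stmt_15 (k : ℝ) (hk : 0 < k) (K : ℝ → ℝ → ℂ)
    (hK : ∀ y t : ℝ, K y t =
      (((Real.sqrt k : ℝ) : ℂ) / (2 * (π : ℂ) * I * ((Real.sin (Real.sqrt k * t) : ℝ) : ℂ)))
          ^ ((1/2) : ℂ) *
        Complex.exp (I * ((Real.sqrt k : ℝ) : ℂ) * (y : ℂ) ^ 2 /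
          (2 * ((Real.tan (Real.sqrt k * t) : ℝ) : ℂ)))) :
    ∀ (y t : ℝ), 0 < t → t < π / (2 * Real.sqrt k) →
      I * deriv (fun τ : ℝ => K y τ) t =
        -(1/2) * deriv (fun z : ℝ => deriv (fun w : ℝ => K w t) z) y
          + (k/2) * (y : ℂ) ^ 2 * K y t := by
  intro y t ht0 ht1
  have hω : 0 < √k := Real.sqrt_pos.mpr hk
  have hs : Real.sin (√k * t) ≠ 0 := by
    have : t * (2 * √k) < π := (lt_div_iff₀ (by positivity)).mp ht1
    exact (Real.sin_pos_of_pos_of_lt_pi (by positivity) (by linarith [Real.pi_pos])).ne'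
  have hkC : (k : ℂ) = (√k : ℂ) ^ 2 := by exact_mod_cast (Real.sq_sqrt hk.le).symm
  refine schrodinger_harmonic_of_gaussian_ansatz K (fun y τ => by rw [hK, mul_div_right_comm])
    (hasDerivAt_harmonic_amplitude hω.ne' hs) (hasDerivAt_harmonic_phase hs) ?_ ?_ y
  · ring
  · rw [hkC]
    linear_combination (-(√k : ℂ) ^ 2 / 2) * I_sq
end

section
/- Let k > 0 and 0 < t < π/(2√k). Then ∏_{n=1}^∞ (1 - k·(t/((n-1/2)π))²) = cos(√k·t), and in particular this product is strictly positive, so det(Id + L(Id+K)⁻¹) = cos(√k·t) ≠ 0. -/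
/-!
Pairing the factors of Euler's sine product for `sin (2x) / (2x)` by parity, the even ones are the
factors `1 - (x / ((n + 1/2)π))²` of the cosine product and the odd ones form the sine product for
`sin x / x`; dividing by the latter, `sin (2x) = 2 sin x cos x` leaves `cos x`.
-/

open Real Finset

namespace Real

theorem multipliable_one_sub_div_add_mul_pi_sq (x a : ℝ) :
    Multipliable fun n : ℕ => 1 - (x / ((n + a) * π)) ^ 2 := by
  have hsum : Summable fun n : ℕ => 1 / |(n : ℝ) + a| ^ (2 : ℝ) :=
    (summable_one_div_nat_add_rpow a 2).2 one_lt_two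
  refine Real.multipliable_one_add_of_summable ((hsum.mul_left (-(x / π) ^ 2)).congr fun n => ?_)
  rw [rpow_two, sq_abs, mul_comm _ π, ← div_div, div_pow (x / π), div_eq_mul_one_div ((x / π) ^ 2),
    neg_mul]

theorem hasProd_euler_sin_prod {x : ℝ} (hx : x ≠ 0) :
    HasProd (fun n : ℕ => 1 - (x / ((n + 1) * π)) ^ 2) (sin x / x) := by
  rw [(multipliable_one_sub_div_add_mul_pi_sq x 1).hasProd_iff_tendsto_nat]
  have h := (tendsto_euler_sin_prod (x / π)).const_mul x⁻¹
  rw [mul_div_cancel₀ x pi_ne_zero, ← div_eq_inv_mul] at h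
  refine h.congr fun N => ?_
  rw [inv_mul_cancel_left₀ hx]
  refine prod_congr rfl fun n _ => ?_
  rw [div_pow, div_pow, mul_pow, div_div, mul_comm]

theorem hasProd_euler_cos_prod {x : ℝ} (hsin : sin x ≠ 0) :
    HasProd (fun n : ℕ => 1 - (x / ((n + 1 / 2) * π)) ^ 2) (cos x) := by
  have hx0 : x ≠ 0 := by rintro rfl; simp at hsin
  set f : ℕ → ℝ := fun j => 1 - (2 * x / ((j + 1) * π)) ^ 2
  have heven : (fun n : ℕ => f (2 * n)) = fun n : ℕ => 1 - (x / ((n + 1 / 2) * π)) ^ 2 := by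
    ext n; simp only [f]; push_cast; field_simp
  have hodd : (fun n : ℕ => f (2 * n + 1)) = fun n : ℕ => 1 - (x / ((n + 1) * π)) ^ 2 := by
    ext n; simp only [f]; push_cast; field_simp; ring
  have hcos := (multipliable_one_sub_div_add_mul_pi_sq x (1 / 2)).hasProd
  have hsplit := HasProd.even_mul_odd (f := f) (heven ▸ hcos)
    (hodd ▸ hasProd_euler_sin_prod hx0)
  have htprod := hsplit.unique (hasProd_euler_sin_prod (mul_ne_zero two_ne_zero hx0))
  rw [sin_two_mul] at htprod
  field_simp at htprod
  rw [← htprod, heven]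
  exact hcos

end Real

theorem stmt_16 (k t : ℝ) (hk : 0 < k) (ht : 0 < t)
    (ht' : t < π / (2 * Real.sqrt k)) :
    HasProd (fun n : ℕ => 1 - k * (t / ((((n : ℝ) + 1) - 1/2) * π)) ^ 2)
        (Real.cos (Real.sqrt k * t)) ∧
      0 < Real.cos (Real.sqrt k * t) ∧ Real.cos (Real.sqrt k * t) ≠ 0 := by
  have hx0 : 0 < √k * t := mul_pos (sqrt_pos.2 hk) ht
  have hx : √k * t < π / 2 := by
    have := (lt_div_iff₀' (by positivity)).1 ht'
    linarith
  have hterm : (fun n : ℕ => 1 - k * (t / (((n : ℝ) + 1 - 1 / 2) * π)) ^ 2) =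
      fun n : ℕ => 1 - (√k * t / ((n + 1 / 2) * π)) ^ 2 := by
    ext n
    rw [mul_div_assoc, mul_pow, sq_sqrt hk.le]
    ring_nf
  have hcos_pos := cos_pos_of_mem_Ioo ⟨by linarith, hx⟩
  exact ⟨hterm ▸ hasProd_euler_cos_prod (sin_pos_of_pos_of_lt_pi hx0 (by linarith)).ne',
    hcos_pos, hcos_pos.ne'⟩
end
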